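/- Let X be a real random variable with density f that is continuous at x∈ℝ, and let K : ℝ → ℝ be bounded, measurable, with compact support. Then lim_{h→0⁺} h·E[ (h^{−1}K((x−X)/h))² ] = f(x)·∫K(u)²du. -/

import Mathlib

open MeasureTheory Filter Set

noncomputable section

namespace DyadicKDE

/-!
Pushing forward along `X`, `h · E[(h⁻¹ K((x - X)/h))²] = h⁻¹ ∫ K((x - t)/h)² dν(t)` with `ν` the
law of `X`. If `K` vanishes outside radius `R`, the integrand lives on the ball of radius `h R`
around `x`, where `|f - f x| ≤ ε` once `h` is small; there `ν` is squeezed between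
`(f x ∓ ε) · volume`, and `∫ K((x - t)/h)² dt = h ∫ K²` by the substitution `t = x - h u`.
-/

section WithDensity

variable {α : Type*} [MeasurableSpace α] {μ : Measure α} {s : Set α}

lemma withDensity_restrict_le_smul_restrict (hs : MeasurableSet s) {w : α → ENNReal}
    {c : ENNReal} (hw : ∀ t ∈ s, w t ≤ c) :
    (μ.withDensity w).restrict s ≤ c • μ.restrict s := by
  rw [restrict_withDensity hs, ← withDensity_const]
  exact withDensity_mono ((ae_restrict_mem hs).mono hw)

lemma smul_restrict_le_withDensity_restrict (hs : MeasurableSet s) {w : α → ENNReal}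
    {c : ENNReal} (hw : ∀ t ∈ s, c ≤ w t) :
    c • μ.restrict s ≤ (μ.withDensity w).restrict s := by
  rw [restrict_withDensity hs, ← withDensity_const]
  exact withDensity_mono ((ae_restrict_mem hs).mono hw)

lemma abs_setIntegral_withDensity_ofReal_sub_le (hs : MeasurableSet s) {w : α → ℝ} {a ε : ℝ}
    (ha : 0 ≤ a) (hε : 0 ≤ ε) (hw : ∀ t ∈ s, |w t - a| ≤ ε) {g : α → ℝ} (hg0 : 0 ≤ g)
    (hg : IntegrableOn g s μ) :
    |∫ t in s, g t ∂μ.withDensity (fun t => ENNReal.ofReal (w t)) - a * ∫ t in s, g t ∂μ|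
      ≤ ε * ∫ t in s, g t ∂μ := by
  set ν := μ.withDensity fun t => ENNReal.ofReal (w t)
  have hup : ν.restrict s ≤ ENNReal.ofReal (a + ε) • μ.restrict s :=
    withDensity_restrict_le_smul_restrict hs fun t ht =>
      ENNReal.ofReal_le_ofReal (by linarith [(abs_le.1 (hw t ht)).2])
  have hlow : ENNReal.ofReal (a - ε) • μ.restrict s ≤ ν.restrict s :=
    smul_restrict_le_withDensity_restrict hs fun t ht =>
      ENNReal.ofReal_le_ofReal (by linarith [(abs_le.1 (hw t ht)).1])
  have hg_up : Integrable g (ENNReal.ofReal (a + ε) • μ.restrict s) :=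
    hg.smul_measure ENNReal.ofReal_ne_top
  have upper : ∫ t in s, g t ∂ν ≤ (a + ε) * ∫ t in s, g t ∂μ :=
    calc ∫ t in s, g t ∂ν ≤ ∫ t, g t ∂(ENNReal.ofReal (a + ε) • μ.restrict s) :=
          integral_mono_measure hup (ae_of_all _ hg0) hg_up
      _ = (a + ε) * ∫ t in s, g t ∂μ := by
          rw [integral_smul_measure, ENNReal.toReal_ofReal (by linarith), smul_eq_mul]
  have lower : (a - ε) * ∫ t in s, g t ∂μ ≤ ∫ t in s, g t ∂ν :=
    calc (a - ε) * ∫ t in s, g t ∂μ ≤ (ENNReal.ofReal (a - ε)).toReal * ∫ t in s, g t ∂μ := by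
          gcongr
          · exact setIntegral_nonneg hs fun t _ => hg0 t
          · rw [ENNReal.toReal_ofReal']
            exact le_max_left _ _
      _ = ∫ t, g t ∂(ENNReal.ofReal (a - ε) • μ.restrict s) := by
          rw [integral_smul_measure, smul_eq_mul]
      _ ≤ ∫ t in s, g t ∂ν :=
          integral_mono_measure hlow (ae_of_all _ hg0) (hg_up.mono_measure hup)
  rw [abs_le]
  constructor <;> linarith

end WithDensity

lemma integral_comp_sub_left_div {E : Type*} [NormedAddCommGroup E] [NormedSpace ℝ E]
    (g : ℝ → E) (x : ℝ) {h : ℝ} (hh : 0 < h) :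
    ∫ t, g ((x - t) / h) = h • ∫ u, g u := by
  rw [integral_sub_left_eq_self (fun s => g (s / h)) volume x, Measure.integral_comp_div,
    abs_of_pos hh]

lemma tendsto_of_forall_eventually_abs_sub_le_mul {ι : Type*} {l : Filter ι} {u : ι → ℝ}
    {L c : ℝ} (hc : 0 ≤ c) (H : ∀ ε > 0, ∀ᶠ i in l, |u i - L| ≤ ε * c) :
    Tendsto u l (nhds L) := by
  refine Metric.tendsto_nhds.2 fun δ hδ => ?_
  filter_upwards [H (δ / (c + 1)) (by positivity)] with i hi
  rw [Real.dist_eq]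
  calc |u i - L| ≤ δ / (c + 1) * c := hi
    _ < δ := by
      rw [div_mul_eq_mul_div, div_lt_iff₀ (by positivity)]
      nlinarith

section Kernel

variable {K : ℝ → ℝ}

lemma mul_integral_sq_inv_mul_comp_eq {Ω : Type*} [MeasurableSpace Ω] (P : Measure Ω)
    {X : Ω → ℝ} (hX : Measurable X) (hK : Measurable K) (x : ℝ) {h : ℝ} (hh : h ≠ 0) :
    h * ∫ ω, (h⁻¹ * K ((x - X ω) / h)) ^ 2 ∂P
      = h⁻¹ * ∫ t, K ((x - t) / h) ^ 2 ∂(Measure.map X P) := by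
  have hg : Measurable fun t => K ((x - t) / h) ^ 2 := by fun_prop
  rw [integral_map hX.aemeasurable hg.aestronglyMeasurable]
  simp only [mul_pow, integral_const_mul]
  field_simp

lemma comp_sub_div_eq_zero_of_notMem_ball {R : ℝ} (hKR : ∀ u, R ≤ ‖u‖ → K u = 0) {x h t : ℝ}
    (hh : 0 < h) (ht : t ∉ Metric.ball x (h * R)) : K ((x - t) / h) = 0 := by
  rw [Metric.mem_ball, not_lt, Real.dist_eq, abs_sub_comm] at ht
  refine hKR _ ?_
  rw [Real.norm_eq_abs, abs_div, abs_of_pos hh, le_div_iff₀ hh]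
  linarith

lemma abs_inv_mul_integral_withDensity_sub_le (hK : Measurable K) {C R : ℝ}
    (hC : ∀ u, |K u| ≤ C) (hKR : ∀ u, R ≤ ‖u‖ → K u = 0) {f : ℝ → ℝ} {x h ε : ℝ} (hh : 0 < h)
    (hfx : 0 ≤ f x) (hε : 0 ≤ ε) (hf : ∀ t ∈ Metric.ball x (h * R), |f t - f x| ≤ ε) :
    |h⁻¹ * ∫ t, K ((x - t) / h) ^ 2 ∂volume.withDensity (fun t => ENNReal.ofReal (f t))
        - f x * ∫ u, K u ^ 2| ≤ ε * ∫ u, K u ^ 2 := by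
  set g : ℝ → ℝ := fun t => K ((x - t) / h) ^ 2
  have hg_supp : ∀ t ∉ Metric.ball x (h * R), g t = 0 := fun t ht => by
    simp only [g, comp_sub_div_eq_zero_of_notMem_ball hKR hh ht, zero_pow two_ne_zero]
  have hg_int : IntegrableOn g (Metric.ball x (h * R)) :=
    IntegrableOn.of_bound measure_ball_lt_top (by fun_prop) (C ^ 2) <| ae_of_all _ fun t => by
      rw [Real.norm_eq_abs, abs_pow]
      exact pow_le_pow_left₀ (abs_nonneg _) (hC _) 2
  have hleb : ∫ t in Metric.ball x (h * R), g t = h * ∫ u, K u ^ 2 := by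
    rw [setIntegral_eq_integral_of_forall_compl_eq_zero hg_supp,
      integral_comp_sub_left_div (fun u => K u ^ 2) x hh, smul_eq_mul]
  have key := abs_setIntegral_withDensity_ofReal_sub_le Metric.isOpen_ball.measurableSet hfx hε
    hf (fun t => sq_nonneg _) hg_int
  rw [hleb, setIntegral_eq_integral_of_forall_compl_eq_zero hg_supp] at key
  set G := ∫ t, g t ∂volume.withDensity (fun t => ENNReal.ofReal (f t))
  set J := ∫ u, K u ^ 2
  have hrescale : h⁻¹ * G - f x * J = h⁻¹ * (G - f x * (h * J)) := by field_simp
  rw [hrescale, abs_mul, abs_of_pos (inv_pos.2 hh)]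
  calc h⁻¹ * |G - f x * (h * J)| ≤ h⁻¹ * (ε * (h * J)) := by gcongr
    _ = ε * J := by field_simp

end Kernel

theorem kde_second_moment_limit_general
    {Ω : Type} [MeasurableSpace Ω] (P : Measure Ω)
    (X : Ω → ℝ) (hX : Measurable X) (f : ℝ → ℝ) (hf0 : ∀ t, 0 ≤ f t)
    (hdens : Measure.map X P = volume.withDensity fun t => ENNReal.ofReal (f t))
    (x : ℝ) (hfx : ContinuousAt f x)
    (K : ℝ → ℝ) (hKmeas : Measurable K) (hKbdd : ∃ C : ℝ, ∀ u, |K u| ≤ C)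
    (hKsupp : HasCompactSupport K) :
    Tendsto (fun h : ℝ => h * ∫ ω, (h⁻¹ * K ((x - X ω) / h)) ^ 2 ∂P)
      (nhdsWithin 0 (Ioi (0 : ℝ)))
      (nhds (f x * ∫ u, K u ^ 2)) := by
  obtain ⟨C, hC⟩ := hKbdd
  obtain ⟨R, hR, hKR⟩ := hKsupp.exists_pos_le_norm
  refine tendsto_of_forall_eventually_abs_sub_le_mul
    (integral_nonneg (μ := volume) fun u => sq_nonneg (K u)) fun ε hε => ?_
  obtain ⟨δ, hδ, hfδ⟩ := Metric.continuousAt_iff.1 hfx ε hε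
  filter_upwards [Ioo_mem_nhdsGT (div_pos hδ hR)] with h ⟨hh, hhδ⟩
  rw [lt_div_iff₀ hR] at hhδ
  rw [mul_integral_sq_inv_mul_comp_eq P hX hKmeas x hh.ne', hdens]
  exact abs_inv_mul_integral_withDensity_sub_le hKmeas hC hKR hh (hf0 x) hε.le
    fun t ht => (hfδ (ht.trans hhδ)).le

/-- **Leading variance constant of the KDE.** If `X` has density `f` continuous at `x` and
`K` is bounded, measurable with compact support, then
`h · E[(h⁻¹ K((x-X)/h))²] → f(x) ∫ K(u)² du` as `h → 0⁺`. -/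
theorem kde_second_moment_limit
    {Ω : Type} [MeasurableSpace Ω] (P : Measure Ω) [IsProbabilityMeasure P]
    (X : Ω → ℝ) (hX : Measurable X) (f : ℝ → ℝ) (hf0 : ∀ t, 0 ≤ f t)
    (hdens : Measure.map X P = volume.withDensity fun t => ENNReal.ofReal (f t))
    (x : ℝ) (hfx : ContinuousAt f x)
    (K : ℝ → ℝ) (hKmeas : Measurable K) (hKbdd : ∃ C : ℝ, ∀ u, |K u| ≤ C)
    (hKsupp : HasCompactSupport K) :
    Tendsto (fun h : ℝ => h * ∫ ω, (h⁻¹ * K ((x - X ω) / h)) ^ 2 ∂P)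
      (nhdsWithin 0 (Ioi (0 : ℝ)))
      (nhds (f x * ∫ u, K u ^ 2)) :=
  kde_second_moment_limit_general P X hX f hf0 hdens x hfx K hKmeas hKbdd hKsupp

end DyadicKDE
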